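/- arXiv:1002.4319 — 3 statements merged into one kernel-verified Lean document; each statement's English description precedes it below -/
import Mathlib

section
/- Let k be a field, k_s its separable closure, V a finite-dimensional k-vector space, and H a group acting k-linearly on V. If V is a semisimple k[H]-module, then V ⊗_k k₁ is a semisimple k₁[H]-module for every intermediate field k ⊆ k₁ ⊆ k_s with k₁/k finite. -/
open TensorProduct

noncomputable def Representation.extendScalars {k V H : Type*} (k₁ : Type*)
    [CommRing k] [CommRing k₁] [Algebra k k₁] [AddCommGroup V] [Module k V] [Monoid H]
    (ρ : Representation k H V) : Representation k₁ H (k₁ ⊗[k] V) where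
  toFun h := LinearMap.baseChange k₁ (ρ h)
  map_one' := by ext v; simp
  map_mul' g h := by ext v; simp

/-!
Over a finite separable extension `K/k`, a `k`-linear map `π` can be averaged into the
`K`-linear map `x ↦ ∑ bᵢ • π (bᵢ^∨ • x)`, where `(bᵢ^∨)` is the trace-dual basis of a basis `(bᵢ)`
of `K/k`; this is the separability idempotent `∑ bᵢ ⊗ bᵢ^∨` acting on `End_k`. The averaging
preserves equivariance, and since `∑ bᵢ bᵢ^∨ = 1` it turns a projection onto a `K`-subspace into a
`K`-linear projection onto it. So a representation over `K` is semisimple once its restriction to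
`k` is. For `V` semisimple over `k`, the restriction of `K ⊗ V` to `k` is the sum of the images
`c ⊗ V` of `V`, hence semisimple.
-/

namespace Module.Basis

variable {k K ι : Type*} [Field k] [Field K] [Algebra k K] [FiniteDimensional k K]
  [Algebra.IsSeparable k K] [Fintype ι] [DecidableEq ι] (b : Basis ι k K)

theorem repr_eq_trace_mul_traceDual (y : K) (i : ι) :
    b.repr y i = Algebra.trace k K (y * b.traceDual i) := by
  conv_lhs => rw [← b.traceDual_traceDual]
  exact b.traceDual.traceDual_repr_apply y i

theorem sum_mul_traceDual : ∑ i, b i * b.traceDual i = 1 := by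
  -- both sides are the trace of multiplication by `y`, read off in the basis `b`
  have htrace (y : K) :
      Algebra.trace k K ((∑ i, b i * b.traceDual i) * y) = Algebra.trace k K y := by
    rw [Algebra.trace_eq_matrix_trace b y, Matrix.trace, Finset.sum_mul, map_sum]
    refine Finset.sum_congr rfl fun i _ => ?_
    rw [Matrix.diag_apply, Algebra.leftMulMatrix_eq_repr_mul, repr_eq_trace_mul_traceDual]
    ring_nf
  refine sub_eq_zero.1 ((traceForm_nondegenerate k K).1 _ fun y => ?_)
  rw [Algebra.traceForm_apply, sub_mul, map_sub, htrace, one_mul, sub_self]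

theorem sum_tmul_traceDual_mul (a : K) :
    ∑ i, b i ⊗ₜ[k] (b.traceDual i * a) = ∑ i, (a * b i) ⊗ₜ[k] b.traceDual i := by
  calc ∑ i, b i ⊗ₜ[k] (b.traceDual i * a)
      = ∑ i, ∑ j, Algebra.trace k K (b.traceDual i * a * b j) • b i ⊗ₜ[k] b.traceDual j := by
        refine Finset.sum_congr rfl fun i _ => ?_
        conv_lhs => rw [← b.traceDual.sum_repr (b.traceDual i * a)]
        simp [tmul_sum, tmul_smul]
    _ = ∑ j, ∑ i, Algebra.trace k K (a * b j * b.traceDual i) • b i ⊗ₜ[k] b.traceDual j := by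
        rw [Finset.sum_comm]
        refine Finset.sum_congr rfl fun j _ => Finset.sum_congr rfl fun i _ => ?_
        ring_nf
    _ = ∑ j, (a * b j) ⊗ₜ[k] b.traceDual j := by
        refine Finset.sum_congr rfl fun j _ => ?_
        conv_rhs => rw [← b.sum_repr (a * b j)]
        simp [sum_tmul, smul_tmul', repr_eq_trace_mul_traceDual]

variable {N : Type*} [AddCommGroup N] [Module K N] [Module k N] [IsScalarTower k K N]

noncomputable def traceDualAverage (π : N →ₗ[k] N) : N →ₗ[K] N where
  toFun x := ∑ i, b i • π (b.traceDual i • x)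
  map_add' x y := by simp only [smul_add, map_add, Finset.sum_add_distrib]
  map_smul' a x := by
    let F : K →ₗ[k] K →ₗ[k] N := LinearMap.mk₂ k (fun u v => u • π (v • x))
      (fun _ _ _ => add_smul ..) (fun _ _ _ => by simp only [smul_assoc])
      (fun _ _ _ => by simp only [add_smul, map_add, smul_add])
      (fun c m n => by rw [smul_assoc, map_smul, smul_comm])
    have h := congrArg (TensorProduct.lift F) (b.sum_tmul_traceDual_mul a)
    simp only [map_sum, lift.tmul, F, LinearMap.mk₂_apply, mul_smul] at h
    rw [RingHom.id_apply, Finset.smul_sum, h]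

theorem traceDualAverage_apply (π : N →ₗ[k] N) (x : N) :
    b.traceDualAverage π x = ∑ i, b i • π (b.traceDual i • x) := rfl

theorem _root_.LinearMap.IsProj.traceDualAverage {W : Submodule K N} {π : N →ₗ[k] N}
    (hπ : LinearMap.IsProj (W.restrictScalars k) π) :
    LinearMap.IsProj W (b.traceDualAverage π) where
  map_mem x := W.sum_mem fun i _ => W.smul_mem _ (hπ.map_mem _)
  map_id x hx := by
    simp_rw [traceDualAverage_apply, hπ.map_id _ (W.smul_mem _ hx), smul_smul, ← Finset.sum_smul,
      b.sum_mul_traceDual, one_smul]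

theorem commute_traceDualAverage {T : N →ₗ[K] N} {π : N →ₗ[k] N}
    (h : Commute (T.restrictScalars k) π) : Commute T (b.traceDualAverage π) := by
  have hTπ (y : N) : T (π y) = π (T y) := LinearMap.congr_fun h.eq y
  ext x
  simp only [Module.End.mul_apply, traceDualAverage_apply, map_sum, map_smul, hTπ]

end Module.Basis

theorem Submodule.commute_projection_of_mem_invtSubmodule {R E : Type*} [Ring R]
    [AddCommGroup E] [Module R E] {p q : Submodule R E} (hpq : IsCompl p q) {T : E →ₗ[R] E}
    (hp : p ∈ Module.End.invtSubmodule T) (hq : q ∈ Module.End.invtSubmodule T) :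
    Commute T (p.projection q hpq) := by
  refine ((LinearMap.IsIdempotentElem.commute_iff (isIdempotentElem_projection hpq)).2 ?_).symm
  rw [range_projection, ker_projection]
  exact ⟨hp, hq⟩

namespace Subrepresentation

variable {A G W : Type*} [Semiring A] [Monoid G] [AddCommMonoid W] [Module A W]
  {ρ : Representation A G W}

theorem isCompl_toSubmodule_iff {ρ₁ ρ₂ : Subrepresentation ρ} :
    IsCompl ρ₁.toSubmodule ρ₂.toSubmodule ↔ IsCompl ρ₁ ρ₂ := by
  simp only [isCompl_iff, disjoint_iff, codisjoint_iff, ← toSubmodule_inf, ← toSubmodule_sup]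
  exact and_congr (toSubmodule_injective.eq_iff (b := ⊥)) (toSubmodule_injective.eq_iff (b := ⊤))

end Subrepresentation

namespace Representation

def restrictScalars (k : Type*) {K G N : Type*} [CommSemiring k] [CommSemiring K] [Algebra k K]
    [Monoid G] [AddCommMonoid N] [Module K N] [Module k N] [IsScalarTower k K N]
    (σ : Representation K G N) : Representation k G N where
  toFun g := (σ g).restrictScalars k
  map_one' := by ext; simp
  map_mul' g h := by ext; simp

theorem extendScalars_restrictScalars {k V H : Type*} (K : Type*)
    [CommRing k] [CommRing K] [Algebra k K] [AddCommGroup V] [Module k V] [Monoid H]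
    (ρ : Representation k H V) :
    (ρ.extendScalars K).restrictScalars k = (trivial k H K).tprod ρ := by
  ext h x
  rfl

theorem isSemisimpleRepresentation_of_restrictScalars {k K G N : Type*} [Field k] [Field K]
    [Algebra k K] [FiniteDimensional k K] [Algebra.IsSeparable k K] [Monoid G] [AddCommGroup N]
    [Module K N] [Module k N] [IsScalarTower k K N] (σ : Representation K G N)
    [IsSemisimpleRepresentation (σ.restrictScalars k)] : IsSemisimpleRepresentation σ := by
  refine ⟨fun W => ?_⟩
  let Wk : Subrepresentation (σ.restrictScalars k) :=
    ⟨W.toSubmodule.restrictScalars k, W.apply_mem_toSubmodule⟩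
  obtain ⟨Uk, hWU⟩ := exists_isCompl Wk
  have hc : IsCompl (W.toSubmodule.restrictScalars k) Uk.toSubmodule :=
    Subrepresentation.isCompl_toSubmodule_iff.2 hWU
  set π := Submodule.projection _ _ hc
  have hπ : LinearMap.IsProj (W.toSubmodule.restrictScalars k) π :=
    ⟨Submodule.projection_apply_mem hc, fun _ => Submodule.projection_apply_of_mem_left hc⟩
  have hπσ (g : G) : Commute ((σ g).restrictScalars k) π :=
    Submodule.commute_projection_of_mem_invtSubmodule hc
      ((Module.End.mem_invtSubmodule _).2 fun _ hv => Wk.apply_mem_toSubmodule g hv)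
      ((Module.End.mem_invtSubmodule _).2 fun _ hv => Uk.apply_mem_toSubmodule g hv)
  set f := (Module.finBasis k K).traceDualAverage π
  have hfσ (g : G) : Commute (σ g) f := Module.Basis.commute_traceDualAverage _ (hπσ g)
  refine ⟨⟨LinearMap.ker f, fun g v hv => ?_⟩,
    Subrepresentation.isCompl_toSubmodule_iff.1 (hπ.traceDualAverage _).isCompl⟩
  rw [LinearMap.mem_ker] at hv ⊢
  rw [← Module.End.mul_apply, ← (hfσ g).eq, Module.End.mul_apply, hv, map_zero]

open scoped MonoidAlgebra in
theorem isSemisimpleModule_trivial_tprod_asModule {k G V W : Type*} [CommRing k] [Monoid G]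
    [AddCommGroup V] [Module k V] [AddCommGroup W] [Module k W] (ρ : Representation k G V)
    [IsSemisimpleModule k[G] ρ.asModule] :
    IsSemisimpleModule k[G] ((trivial k G W).tprod ρ).asModule := by
  let φ (w : W) : ρ.asModule →ₗ[k[G]] ((trivial k G W).tprod ρ).asModule :=
    { toFun v := (w ⊗ₜ[k] v : W ⊗[k] V)
      map_add' := tmul_add (N := V) w
      map_smul' r v := (smul_one_tprod_asModule ρ r w v).symm }
  refine isSemisimpleModule_of_isSemisimpleModule_submodule' (p := fun w => LinearMap.range (φ w))
    (fun w => .range (φ w)) (Submodule.eq_top_iff'.2 fun x => ?_)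
  induction (x : W ⊗[k] V) using TensorProduct.induction_on with
  | zero => exact zero_mem _
  | tmul w v => exact Submodule.mem_iSup_of_mem w ⟨v, rfl⟩
  | add y z hy hz => exact add_mem hy hz

end Representation

theorem semisimple_extendScalars_of_semisimple_of_finite_subext_sepClosure_general
    {k ks V H : Type*} [Field k] [Field ks] [Algebra k ks] [IsSepClosure k ks]
    [AddCommGroup V] [Module k V] [Group H]
    (ρ : Representation k H V)
    (hss : IsSemisimpleModule (MonoidAlgebra k H) ρ.asModule)
    (k₁ : IntermediateField k ks) (hfin : FiniteDimensional k k₁) :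
    IsSemisimpleModule (MonoidAlgebra k₁ H) (ρ.extendScalars k₁).asModule := by
  have : Algebra.IsSeparable k k₁ := Algebra.isSeparable_tower_bot_of_isSeparable k k₁ ks
  have hk := Representation.isSemisimpleModule_trivial_tprod_asModule (W := k₁) ρ
  rw [← Representation.isSemisimpleRepresentation_iff_isSemisimpleModule_asModule,
    ← Representation.extendScalars_restrictScalars] at hk
  rw [← Representation.isSemisimpleRepresentation_iff_isSemisimpleModule_asModule]
  exact Representation.isSemisimpleRepresentation_of_restrictScalars (k := k) _

set_option synthInstance.maxHeartbeats 800000 in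
/-- If `V` is a semisimple `k[H]`-module, then for every finite subextension `k₁`
of the separable closure `kₛ` of `k`, the module `V ⊗[k] k₁` is a semisimple
`k₁[H]`-module. -/
theorem semisimple_extendScalars_of_semisimple_of_finite_subext_sepClosure
    {k ks V H : Type*} [Field k] [Field ks] [Algebra k ks] [IsSepClosure k ks]
    [AddCommGroup V] [Module k V] [FiniteDimensional k V] [Group H]
    (ρ : Representation k H V)
    (hss : IsSemisimpleModule (MonoidAlgebra k H) ρ.asModule)
    (k₁ : IntermediateField k ks) (hfin : FiniteDimensional k k₁) :
    IsSemisimpleModule (MonoidAlgebra k₁ H) (ρ.extendScalars k₁).asModule :=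
  semisimple_extendScalars_of_semisimple_of_finite_subext_sepClosure_general ρ hss k₁ hfin
end

section
/- Let V be a finite-dimensional vector space over a field k and H a group acting k-linearly on V. Suppose there is a chain of H-stable subspaces 0 = V₀ ⊂ V₁ ⊂ ⋯ ⊂ V_n = V (a 'flag' stabilized by H). Then V is a semisimple k[H]-module if and only if for every H-stable flag there exists an H-stable direct sum decomposition V = W₁ ⊕ ⋯ ⊕ W_n with V_i = W₁ ⊕ ⋯ ⊕ W_i for all i. -/
/-!
The `H`-stable subspaces form a sublattice of the modular lattice of subspaces that is isomorphic
to the lattice of `k[H]`-submodules, so semisimplicity says that every stable subspace has a stable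
complement. Given stable complements `Qᵢ` of the `Fᵢ`, the modular law shows that the stable pieces
`Wᵢ = Qᵢ ⊓ Fᵢ₊₁` split the flag. Conversely, a stable `p` with `0 < p < V` gives the flag
`0 < p < V`, and in a stable splitting `V = W₀ ⊕ W₁` of it `W₀ = p`, so `W₁` is a stable complement.
-/

open scoped MonoidAlgebra

theorem iSupIndep_of_disjoint_of_le {ι α : Type*} [LinearOrder ι] [Fintype ι]
    [CompleteLattice α] [IsModularLattice α] {W L : ι → α}
    (hdisj : ∀ i, Disjoint (W i) (L i)) (hle : ∀ i j, i < j → W i ≤ L j) : iSupIndep W := by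
  classical
  rw [iSupIndep_iff_supIndep_univ]
  induction (Finset.univ : Finset ι) using Finset.induction_on_max with
  | empty => exact Finset.supIndep_empty W
  | insert a s hlt hs =>
    exact hs.insert <| (hdisj a).mono_right <| Finset.sup_le fun j hj => hle j a (hlt j hj)

namespace Sublattice

variable {α : Type*} [CompleteLattice α] {S : Sublattice α}

theorem exists_flag_splitting [IsModularLattice α] (hS : ∀ p ∈ S, ∃ q ∈ S, IsCompl p q) {n : ℕ}
    {F : Fin (n + 1) → α} (hF : Monotone F) (hFS : ∀ i, F i ∈ S) :
    ∃ W : Fin n → α, (∀ i, W i ∈ S) ∧ iSupIndep W ∧ ∀ i, F i.succ = F i.castSucc ⊔ W i := by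
  choose Q hQS hQ using fun i : Fin n => hS _ (hFS i.castSucc)
  refine ⟨fun i => Q i ⊓ F i.succ, fun i => S.inf_mem (hQS i) (hFS _), ?_, fun i => ?_⟩
  · exact iSupIndep_of_disjoint_of_le (L := fun i => F i.castSucc)
      (fun i => (hQ i).disjoint.symm.mono_left inf_le_left)
      (fun i j hij => inf_le_right.trans (hF (Fin.succ_le_castSucc_iff.2 hij)))
  · rw [← sup_inf_assoc_of_le _ (hF (Fin.castSucc_le_succ i)), (hQ i).sup_eq_top, top_inf_eq]

theorem exists_isCompl_of_flag_splitting (hbot : ⊥ ∈ S) (htop : ⊤ ∈ S)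
    (hsplit : ∀ (n : ℕ) (F : Fin (n + 1) → α), StrictMono F → F 0 = ⊥ → F (Fin.last n) = ⊤ →
      (∀ i, F i ∈ S) →
      ∃ W : Fin n → α, (∀ i, W i ∈ S) ∧ iSupIndep W ∧ ∀ i, F i.succ = F i.castSucc ⊔ W i)
    {p : α} (hp : p ∈ S) : ∃ q ∈ S, IsCompl p q := by
  rcases eq_bot_or_bot_lt p with rfl | hp_bot
  · exact ⟨⊤, htop, isCompl_bot_top⟩
  rcases eq_top_or_lt_top p with rfl | hp_top
  · exact ⟨⊥, hbot, isCompl_top_bot⟩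
  have hF : StrictMono ![⊥, p, ⊤] := by
    rw [Fin.strictMono_iff_lt_succ]
    intro i
    fin_cases i
    exacts [hp_bot, hp_top]
  have hFS : ∀ i, ![⊥, p, ⊤] i ∈ S := by
    intro i
    fin_cases i
    exacts [hbot, hp, htop]
  obtain ⟨W, hWS, hW, hsplitW⟩ := hsplit 2 _ hF rfl rfl hFS
  have hW0 : p = W 0 := by simpa using hsplitW 0
  have hW1 : ⊤ = p ⊔ W 1 := by simpa using hsplitW 1
  exact ⟨W 1, hWS 1, hW0 ▸ hW.pairwiseDisjoint (by decide), codisjoint_iff.2 hW1.symm⟩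

theorem forall_exists_isCompl_iff_flag_splitting [IsModularLattice α] (hbot : ⊥ ∈ S)
    (htop : ⊤ ∈ S) :
    (∀ p ∈ S, ∃ q ∈ S, IsCompl p q) ↔
      ∀ (n : ℕ) (F : Fin (n + 1) → α), StrictMono F → F 0 = ⊥ → F (Fin.last n) = ⊤ →
        (∀ i, F i ∈ S) →
        ∃ W : Fin n → α, (∀ i, W i ∈ S) ∧ iSupIndep W ∧ ∀ i, F i.succ = F i.castSucc ⊔ W i :=
  ⟨fun hS _ _ hF _ _ hFS => exists_flag_splitting hS hF.monotone hFS,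
    fun hsplit _ hp => exists_isCompl_of_flag_splitting hbot htop hsplit hp⟩

end Sublattice

namespace Representation

variable {k G V : Type*} [CommRing k] [Monoid G] [AddCommGroup V] [Module k V]
  (ρ : Representation k G V)

theorem mem_invtSubmodule_iff_forall_mem {p : Submodule k V} :
    p ∈ ρ.invtSubmodule ↔ ∀ g, ∀ v ∈ p, ρ g v ∈ p := by
  simp only [mem_invtSubmodule, Module.End.mem_invtSubmodule_iff_forall_mem_of_mem]

theorem isCompl_invtSubmodule_iff {p q : ρ.invtSubmodule} :
    IsCompl p q ↔ IsCompl (p : Submodule k V) q := by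
  simp only [isCompl_iff, disjoint_iff, codisjoint_iff, ← Subtype.coe_inj, Sublattice.coe_inf,
    Sublattice.coe_sup, invtSubmodule.coe_bot, invtSubmodule.coe_top]

theorem isSemisimpleModule_asModule_iff :
    IsSemisimpleModule k[G] ρ.asModule ↔
      ∀ p ∈ ρ.invtSubmodule, ∃ q ∈ ρ.invtSubmodule, IsCompl p q := by
  rw [isSemisimpleModule_iff, ← ρ.mapSubmodule.complementedLattice_iff, complementedLattice_iff]
  simp only [Subtype.forall, Subtype.exists, isCompl_invtSubmodule_iff, exists_prop]

end Representation

theorem semisimple_iff_every_stable_flag_splits_general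
    {k V H : Type*} [Field k] [AddCommGroup V] [Module k V]
    [Group H] (ρ : Representation k H V) :
    IsSemisimpleModule (MonoidAlgebra k H) ρ.asModule ↔
      ∀ (n : ℕ) (F : Fin (n + 1) → Submodule k V),
        StrictMono F → F 0 = ⊥ → F (Fin.last n) = ⊤ →
        (∀ i, ∀ h : H, ∀ v ∈ F i, ρ h v ∈ F i) →
        ∃ W : Fin n → Submodule k V,
          (∀ i, ∀ h : H, ∀ v ∈ W i, ρ h v ∈ W i) ∧
          iSupIndep W ∧
          ∀ i : Fin n, F i.succ = F i.castSucc ⊔ W i := by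
  simp only [← ρ.mem_invtSubmodule_iff_forall_mem]
  rw [ρ.isSemisimpleModule_asModule_iff]
  exact ρ.invtSubmodule.forall_exists_isCompl_iff_flag_splitting
    (Representation.invtSubmodule.bot_mem ρ) (Representation.invtSubmodule.top_mem ρ)

/-- **Flag characterization of semisimplicity** (the `GL(V)` case of complete
reducibility): a finite-dimensional `k`-linear representation `V` of a group `H`
is semisimple iff every `H`-stable flag `0 = F 0 ⊂ F 1 ⊂ ⋯ ⊂ F n = V` admits an
`H`-stable splitting `V = W 0 ⊕ ⋯ ⊕ W (n-1)` with `F (i+1) = F i ⊕ W i`. -/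
theorem semisimple_iff_every_stable_flag_splits
    {k V H : Type*} [Field k] [AddCommGroup V] [Module k V] [FiniteDimensional k V]
    [Group H] (ρ : Representation k H V) :
    IsSemisimpleModule (MonoidAlgebra k H) ρ.asModule ↔
      ∀ (n : ℕ) (F : Fin (n + 1) → Submodule k V),
        StrictMono F → F 0 = ⊥ → F (Fin.last n) = ⊤ →
        (∀ i, ∀ h : H, ∀ v ∈ F i, ρ h v ∈ F i) →
        ∃ W : Fin n → Submodule k V,
          (∀ i, ∀ h : H, ∀ v ∈ W i, ρ h v ∈ W i) ∧
          iSupIndep W ∧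
          ∀ i : Fin n, F i.succ = F i.castSucc ⊔ W i :=
  semisimple_iff_every_stable_flag_splits_general ρ
end

section
/- Let k₁/k be a finite Galois extension with group Γ, V a finite-dimensional k-vector space, H a group acting k-linearly on V, and suppose every H-stable, Γ-stable flag of V ⊗_k k₁ admits an H-stable, Γ-stable splitting. If moreover V ⊗_k k₁ has an H-stable flag with no H-stable splitting (i.e. V ⊗_k k₁ is not semisimple), then there exists a nonzero proper H-stable, Γ-stable subspace of V ⊗_k k₁, and hence a nonzero proper H-stable k-subspace of V. -/
open TensorProduct

/-- The semilinear action `id_V ⊗ γ` of a Galois automorphism on `k₁ ⊗[k] V`. -/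
noncomputable def galoisTwist {k V k₁ : Type*} [CommRing k] [CommRing k₁]
    [Algebra k k₁] [AddCommGroup V] [Module k V] (γ : k₁ ≃ₐ[k] k₁) :
    k₁ ⊗[k] V →ₗ[k] k₁ ⊗[k] V :=
  LinearMap.rTensor V γ.toLinearMap

section

variable {k k₁ V H : Type*} [Field k] [Field k₁] [Algebra k k₁]
  [AddCommGroup V] [Module k V] [Group H]

/-- A submodule is stable under the `H`-action on `k₁ ⊗[k] V`. -/
def HStable (ρ : Representation k H V) (W : Submodule k₁ (k₁ ⊗[k] V)) : Prop :=
  ∀ h : H, ∀ v ∈ W, ρ.extendScalars k₁ h v ∈ W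

/-- A submodule is stable under the semilinear Galois action on `k₁ ⊗[k] V`. -/
def GalStable (W : Submodule k₁ (k₁ ⊗[k] V)) : Prop :=
  ∀ γ : k₁ ≃ₐ[k] k₁, ∀ v ∈ W, galoisTwist (V := V) γ v ∈ W

/-- `W` is an `H`-stable splitting of the flag `F`. -/
def IsSplitting {n : ℕ} (F : Fin (n + 1) → Submodule k₁ (k₁ ⊗[k] V))
    (W : Fin n → Submodule k₁ (k₁ ⊗[k] V)) : Prop :=
  iSupIndep W ∧ ∀ i : Fin n, F i.succ = F i.castSucc ⊔ W i

/-- A flag of `k₁ ⊗[k] V`. -/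
def IsFlag {n : ℕ} (F : Fin (n + 1) → Submodule k₁ (k₁ ⊗[k] V)) : Prop :=
  StrictMono F ∧ F 0 = ⊥ ∧ F (Fin.last n) = ⊤

end

/-!
The socle of `k₁ ⊗[k] V`, the sum of its irreducible `H`-subrepresentations, is defined
canonically from the lattice of `H`-stable subspaces, so every lattice automorphism fixes it; in
particular it is stable under the semilinear Galois action. If the socle were everything, the
lattice of `H`-stable subspaces would be complemented and every `H`-stable flag would split, so
the socle is a nonzero proper subspace.

Descent: if `x = ∑ eᵢ ⊗ vᵢ` lies in a Galois-stable subspace `W`, then so does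
`∑_γ γ(c • x) = 1 ⊗ ∑ tr(c eᵢ) vᵢ`, and taking `c` in the trace-dual basis of `(eᵢ)` puts
`1 ⊗ vⱼ` in `W`. So `{v | 1 ⊗ v ∈ socle}` is a nonzero proper `H`-stable subspace of `V`.
-/

section Lattice

variable {α : Type*} [CompleteLattice α]

theorem iSupIndep_of_disjoint_biSup_lt [IsModularLattice α] {ι : Type*} [LinearOrder ι]
    [Fintype ι] {W : ι → α} (hW : ∀ i, Disjoint (W i) (⨆ j < i, W j)) : iSupIndep W := by
  classical
  rw [iSupIndep_iff_supIndep_univ]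
  induction (Finset.univ : Finset ι) using Finset.induction_on_max with
  | empty => exact Finset.supIndep_empty W
  | insert a s hlt hs =>
    refine hs.insert ((hW a).mono_right (Finset.sup_le fun j hj => ?_))
    exact le_iSup₂_of_le j (hlt j hj) le_rfl

theorem Monotone.exists_iSupIndep_sup_eq [IsModularLattice α] [ComplementedLattice α] {n : ℕ}
    {F : Fin (n + 1) → α} (hF : Monotone F) :
    ∃ W : Fin n → α, iSupIndep W ∧ ∀ i, F i.succ = F i.castSucc ⊔ W i := by
  choose c hc using fun i : Fin n => exists_isCompl (F i.castSucc)
  refine ⟨fun i => c i ⊓ F i.succ, iSupIndep_of_disjoint_biSup_lt fun i => ?_, fun i => ?_⟩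
  · refine ((hc i).disjoint.symm.mono_left inf_le_left).mono_right (iSup₂_le fun j hj => ?_)
    exact inf_le_right.trans (hF (Fin.succ_le_castSucc_iff.2 hj))
  · rw [← sup_inf_assoc_of_le _ (hF (Fin.castSucc_le_succ i)), (hc i).sup_eq_top, top_inf_eq]

theorem OrderIso.map_sSup_setOf_isAtom (e : α ≃o α) :
    e (sSup {a | IsAtom a}) = sSup {a | IsAtom a} := by
  rw [e.map_sSup_eq_sSup_symm_preimage]
  congr 1
  ext a
  exact e.symm.isAtom_iff a

end Lattice

namespace CompleteSublattice

variable {α : Type*} [CompleteLattice α] (L : CompleteSublattice α)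

instance instIsModularLattice [IsModularLattice α] : IsModularLattice L :=
  ⟨fun {x y z} h => by
    change ((x ⊔ y) ⊓ z : α) ≤ x ⊔ y ⊓ z
    exact IsModularLattice.sup_inf_le_assoc_of_le (y : α) h⟩

theorem iSupIndep_coe_iff {ι : Type*} {W : ι → L} :
    iSupIndep (fun i => (W i : α)) ↔ iSupIndep W := by
  simp only [iSupIndep, CompleteSublattice.disjoint_iff, CompleteSublattice.coe_iSup]

def orderIsoOfMapsTo (e : α ≃o α) (he : ∀ a, a ∈ L ↔ e a ∈ L) : L ≃o L where
  toEquiv := e.toEquiv.subtypeEquiv he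
  map_rel_iff' := e.le_iff_le

end CompleteSublattice

namespace Representation

section Semiring

variable {K G M : Type*} [Semiring K] [AddCommMonoid M] [Module K M] [Monoid G]
  (σ : Representation K G M)

def invtCompleteSublattice : CompleteSublattice (Submodule K M) :=
  CompleteSublattice.mk' {p | ∀ g, ∀ v ∈ p, σ g v ∈ p}
    (fun s hs g v hv => by
      have : sSup s ≤ (sSup s).comap (σ g) :=
        sSup_le fun p hp x hx => le_sSup (α := Submodule K M) hp (hs hp g x hx)
      exact this hv)
    (fun s hs g v hv => Submodule.mem_sInf.2 fun p hp => hs hp g v (Submodule.mem_sInf.1 hv p hp))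

def socle : Submodule K M :=
  ↑(sSup {A : σ.invtCompleteSublattice | IsAtom A})

theorem socle_mem_invtCompleteSublattice : σ.socle ∈ σ.invtCompleteSublattice :=
  Subtype.prop _

end Semiring

variable {K G M : Type*} [Field K] [AddCommGroup M] [Module K M] [FiniteDimensional K M]
  [Monoid G] (σ : Representation K G M)

theorem socle_ne_bot [Nontrivial M] : σ.socle ≠ ⊥ := by
  have : Nontrivial σ.invtCompleteSublattice :=
    ⟨⊥, ⊤, fun h => bot_ne_top (congrArg Subtype.val h : (⊥ : Submodule K M) = ⊤)⟩
  obtain ⟨A, hA⟩ := IsAtomic.exists_atom σ.invtCompleteSublattice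
  intro hS
  exact hA.1 (le_bot_iff.1 ((le_sSup hA : A ≤ _).trans (Subtype.coe_injective hS).le))

theorem exists_iSupIndep_sup_eq_of_socle_eq_top (hσ : σ.socle = ⊤) {n : ℕ}
    {F : Fin (n + 1) → Submodule K M} (hF : Monotone F)
    (hFσ : ∀ i, F i ∈ σ.invtCompleteSublattice) :
    ∃ W : Fin n → Submodule K M, (∀ i, W i ∈ σ.invtCompleteSublattice) ∧
      iSupIndep W ∧ ∀ i, F i.succ = F i.castSucc ⊔ W i := by
  have := CompleteLattice.isCompactlyGenerated_of_wellFoundedGT (α := σ.invtCompleteSublattice)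
  have := complementedLattice_of_sSup_atoms_eq_top (α := σ.invtCompleteSublattice)
    (Subtype.coe_injective hσ)
  obtain ⟨W, hW, hFW⟩ :=
    Monotone.exists_iSupIndep_sup_eq (F := fun i => (⟨F i, hFσ i⟩ : σ.invtCompleteSublattice))
      fun i j hij => hF hij
  exact ⟨fun i => W i, fun i => (W i).2, (CompleteSublattice.iSupIndep_coe_iff _).2 hW,
    fun i => congrArg Subtype.val (hFW i)⟩

end Representation

section CommRing

variable {k k₁ V : Type*} [CommRing k] [CommRing k₁] [Algebra k k₁] [AddCommGroup V]
  [Module k V]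

@[simp]
theorem galoisTwist_tmul (γ : k₁ ≃ₐ[k] k₁) (a : k₁) (v : V) :
    galoisTwist γ (a ⊗ₜ[k] v) = γ a ⊗ₜ[k] v :=
  rfl

theorem galoisTwist_smul (γ : k₁ ≃ₐ[k] k₁) (c : k₁) (x : k₁ ⊗[k] V) :
    galoisTwist γ (c • x) = γ c • galoisTwist γ x := by
  induction x using TensorProduct.induction_on with
  | zero => simp
  | tmul a v => simp [smul_tmul']
  | add x y hx hy => simp [hx, hy]

theorem galoisTwist_bijective (γ : k₁ ≃ₐ[k] k₁) :
    Function.Bijective (galoisTwist (V := V) γ) :=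
  (LinearEquiv.rTensor V γ.toLinearEquiv).bijective

noncomputable def galoisTwistₛₗ (γ : k₁ ≃ₐ[k] k₁) :
    k₁ ⊗[k] V →ₛₗ[(γ.toRingEquiv : k₁ →+* k₁)] k₁ ⊗[k] V where
  toFun := galoisTwist γ
  map_add' := map_add _
  map_smul' := galoisTwist_smul γ

theorem galoisTwist_extendScalars {H : Type*} [Monoid H] (ρ : Representation k H V)
    (γ : k₁ ≃ₐ[k] k₁) (h : H) (x : k₁ ⊗[k] V) :
    galoisTwist γ (ρ.extendScalars k₁ h x) = ρ.extendScalars k₁ h (galoisTwist γ x) := by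
  induction x using TensorProduct.induction_on with
  | zero => simp
  | tmul a v => rfl
  | add x y hx hy => simp [hx, hy]

def Submodule.rationalPart (W : Submodule k₁ (k₁ ⊗[k] V)) : Submodule k V :=
  (W.restrictScalars k).comap (TensorProduct.mk k k₁ V 1)

theorem Submodule.mem_rationalPart {W : Submodule k₁ (k₁ ⊗[k] V)} {v : V} :
    v ∈ W.rationalPart ↔ (1 : k₁) ⊗ₜ[k] v ∈ W :=
  Iff.rfl

theorem Submodule.rationalPart_ne_top {W : Submodule k₁ (k₁ ⊗[k] V)} (hW : W ≠ ⊤) :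
    W.rationalPart ≠ ⊤ := by
  refine fun h => hW (eq_top_iff'.2 fun x => ?_)
  induction x using TensorProduct.induction_on with
  | zero => exact W.zero_mem
  | tmul a v =>
    simpa [smul_tmul'] using W.smul_mem a (mem_rationalPart.1 (h ▸ mem_top : v ∈ _))
  | add x y hx hy => exact W.add_mem hx hy

end CommRing

section Field

variable {k k₁ V H : Type*} [Field k] [Field k₁] [Algebra k k₁] [AddCommGroup V] [Module k V]
  [Group H]

theorem hStable_map_galoisTwist_iff (ρ : Representation k H V) (γ : k₁ ≃ₐ[k] k₁)
    (W : Submodule k₁ (k₁ ⊗[k] V)) :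
    HStable ρ (W.map (galoisTwistₛₗ γ)) ↔ HStable ρ W := by
  refine ⟨fun hW h x hx => ?_, fun hW => ?_⟩
  · obtain ⟨y, hy, hyx⟩ := hW h _ (Submodule.mem_map_of_mem (f := galoisTwistₛₗ γ) hx)
    rwa [← (galoisTwist_bijective γ).injective (hyx.trans (galoisTwist_extendScalars ρ γ h x).symm)]
  · rintro h _ ⟨x, hx, rfl⟩
    exact ⟨_, hW h x hx, galoisTwist_extendScalars ρ γ h x⟩

theorem galStable_socle (ρ : Representation k H V) :
    GalStable (ρ.extendScalars k₁).socle := by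
  intro γ v hv
  let e := Submodule.orderIsoMapComapOfBijective (galoisTwistₛₗ (V := V) γ)
    (galoisTwist_bijective γ)
  have hS := congrArg Subtype.val
    ((CompleteSublattice.orderIsoOfMapsTo (ρ.extendScalars k₁).invtCompleteSublattice e
      fun W => (hStable_map_galoisTwist_iff ρ γ W).symm).map_sSup_setOf_isAtom)
  change (ρ.extendScalars k₁).socle.map (galoisTwistₛₗ γ) = (ρ.extendScalars k₁).socle at hS
  rw [← hS]
  exact Submodule.mem_map_of_mem hv

theorem Submodule.apply_mem_rationalPart (ρ : Representation k H V)
    {W : Submodule k₁ (k₁ ⊗[k] V)} (hW : HStable ρ W) (h : H) {v : V}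
    (hv : v ∈ W.rationalPart) : ρ h v ∈ W.rationalPart :=
  hW h _ hv

variable [FiniteDimensional k k₁] [IsGalois k k₁]

theorem sum_galoisTwist_tmul (a : k₁) (v : V) :
    ∑ γ : k₁ ≃ₐ[k] k₁, galoisTwist γ (a ⊗ₜ[k] v) = (1 : k₁) ⊗ₜ[k] (Algebra.trace k k₁ a • v) := by
  simp only [galoisTwist_tmul]
  rw [← sum_tmul, ← trace_eq_sum_automorphisms, Algebra.algebraMap_eq_smul_one, smul_tmul]

theorem exists_one_tmul_mem_of_galStable {W : Submodule k₁ (k₁ ⊗[k] V)} (hG : GalStable W)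
    (hW : W ≠ ⊥) : ∃ v ≠ 0, (1 : k₁) ⊗ₜ[k] v ∈ W := by
  classical
  obtain ⟨x, hx, hx0⟩ := Submodule.exists_mem_ne_zero_of_ne_bot hW
  let e := Module.finBasis k k₁
  let e' := (Algebra.traceForm k k₁).dualBasis (traceForm_nondegenerate k k₁) e
  let c := equivFinsuppOfBasisLeft e x
  have hxc : x = ∑ i, e i ⊗ₜ[k] c i := by
    conv_lhs => rw [← (equivFinsuppOfBasisLeft e).symm_apply_apply x]
    rw [equivFinsuppOfBasisLeft_symm_apply, Finsupp.sum_fintype _ _ (by simp)]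
  obtain ⟨j, hj⟩ : ∃ j, c j ≠ 0 := by
    by_contra! h
    exact hx0 (by simp [hxc, h])
  have hdual : ∀ i, Algebra.trace k k₁ (e' j * e i) = if i = j then 1 else 0 :=
    LinearMap.BilinForm.apply_dualBasis_left (traceForm_nondegenerate k k₁) e j
  have hsum : ∑ γ : k₁ ≃ₐ[k] k₁, galoisTwist γ (e' j • x) = (1 : k₁) ⊗ₜ[k] c j := by
    simp_rw [hxc, Finset.smul_sum, map_sum, smul_tmul']
    rw [Finset.sum_comm]
    simp_rw [sum_galoisTwist_tmul, smul_eq_mul, hdual, ite_smul, one_smul, zero_smul,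
      ← tmul_sum, Finset.sum_ite_eq', Finset.mem_univ, if_true]
  exact ⟨c j, hj, hsum ▸ W.sum_mem fun γ _ => hG γ _ (W.smul_mem _ hx)⟩

theorem Submodule.rationalPart_ne_bot {W : Submodule k₁ (k₁ ⊗[k] V)} (hG : GalStable W)
    (hW : W ≠ ⊥) : W.rationalPart ≠ ⊥ := by
  obtain ⟨v, hv0, hv⟩ := exists_one_tmul_mem_of_galStable hG hW
  exact (Submodule.ne_bot_iff _).2 ⟨v, hv, hv0⟩

end Field

theorem exists_stable_proper_subspace_of_not_semisimple_general
    {k k₁ V H : Type*} [Field k] [Field k₁] [Algebra k k₁]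
    [FiniteDimensional k k₁] [IsGalois k k₁]
    [AddCommGroup V] [Module k V] [FiniteDimensional k V] [Group H]
    (ρ : Representation k H V)
    (hns : ∃ (n : ℕ) (F : Fin (n + 1) → Submodule k₁ (k₁ ⊗[k] V)),
      IsFlag F ∧ (∀ i, HStable ρ (F i)) ∧
      ¬ ∃ W : Fin n → Submodule k₁ (k₁ ⊗[k] V),
          (∀ i, HStable ρ (W i)) ∧ IsSplitting F W) :
    (∃ W : Submodule k₁ (k₁ ⊗[k] V),
        W ≠ ⊥ ∧ W ≠ ⊤ ∧ HStable ρ W ∧ GalStable W) ∧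
      ∃ W₀ : Submodule k V, W₀ ≠ ⊥ ∧ W₀ ≠ ⊤ ∧ ∀ h : H, ∀ v ∈ W₀, ρ h v ∈ W₀ := by
  obtain ⟨n, F, hF, hFH, hno⟩ := hns
  set S := (ρ.extendScalars k₁).socle
  have hS_top : S ≠ ⊤ := fun hS =>
    hno ((ρ.extendScalars k₁).exists_iSupIndep_sup_eq_of_socle_eq_top hS hF.1.monotone hFH)
  have : Nontrivial (k₁ ⊗[k] V) := (Submodule.nontrivial_iff k₁).1 (nontrivial_of_ne S ⊤ hS_top)
  have hS_bot : S ≠ ⊥ := (ρ.extendScalars k₁).socle_ne_bot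
  have hSH : HStable ρ S := (ρ.extendScalars k₁).socle_mem_invtCompleteSublattice
  have hSG : GalStable S := galStable_socle ρ
  exact ⟨⟨S, hS_bot, hS_top, hSH, hSG⟩, S.rationalPart, S.rationalPart_ne_bot hSG hS_bot,
    S.rationalPart_ne_top hS_top, fun h _ => S.apply_mem_rationalPart ρ hSH h⟩

/-- **The `GL(V)` instance of the main argument.**  Let `k₁/k` be a finite Galois
extension with group `Γ`.  Suppose every `H`-stable, `Γ`-stable flag of
`V ⊗[k] k₁` admits an `H`-stable, `Γ`-stable splitting, while some `H`-stable
flag of `V ⊗[k] k₁` has no `H`-stable splitting (i.e. `V ⊗[k] k₁` is not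
semisimple).  Then there is a nonzero proper `H`-stable, `Γ`-stable subspace of
`V ⊗[k] k₁`, and hence a nonzero proper `H`-stable `k`-subspace of `V`. -/
theorem exists_stable_proper_subspace_of_not_semisimple
    {k k₁ V H : Type*} [Field k] [Field k₁] [Algebra k k₁]
    [FiniteDimensional k k₁] [IsGalois k k₁]
    [AddCommGroup V] [Module k V] [FiniteDimensional k V] [Group H]
    (ρ : Representation k H V)
    (hsplit : ∀ (n : ℕ) (F : Fin (n + 1) → Submodule k₁ (k₁ ⊗[k] V)),
      IsFlag F → (∀ i, HStable ρ (F i)) → (∀ i, GalStable (F i)) →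
      ∃ W : Fin n → Submodule k₁ (k₁ ⊗[k] V),
        (∀ i, HStable ρ (W i)) ∧ (∀ i, GalStable (W i)) ∧ IsSplitting F W)
    (hns : ∃ (n : ℕ) (F : Fin (n + 1) → Submodule k₁ (k₁ ⊗[k] V)),
      IsFlag F ∧ (∀ i, HStable ρ (F i)) ∧
      ¬ ∃ W : Fin n → Submodule k₁ (k₁ ⊗[k] V),
          (∀ i, HStable ρ (W i)) ∧ IsSplitting F W) :
    (∃ W : Submodule k₁ (k₁ ⊗[k] V),
        W ≠ ⊥ ∧ W ≠ ⊤ ∧ HStable ρ W ∧ GalStable W) ∧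
      ∃ W₀ : Submodule k V, W₀ ≠ ⊥ ∧ W₀ ≠ ⊤ ∧ ∀ h : H, ∀ v ∈ W₀, ρ h v ∈ W₀ :=
  exists_stable_proper_subspace_of_not_semisimple_general ρ hns
end
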